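/- For A, B ∈ B(H), if the off-diagonal block operator T = [[O, A],[B, O]] satisfies w(T) = (1/2)‖Re(A) + i·Im(B)‖, then ‖A+B*‖ = ‖A−B*‖ = ‖Re(A) + i·Im(B)‖. -/

import Mathlib

open ContinuousLinearMap in
noncomputable def numRad {E : Type*} [NormedAddCommGroup E] [InnerProductSpace ℂ E]
    (T : E →L[ℂ] E) : ℝ :=
  ⨆ x : {x : E // ‖x‖ = 1}, ‖(inner ℂ (T x) (x : E) : ℂ)‖

variable {H : Type*} [NormedAddCommGroup H] [InnerProductSpace ℂ H] [CompleteSpace H]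

/-- `|A| = (A*A)^{1/2}`, the positive square root of `A*A`. -/
noncomputable def absOp (A : H →L[ℂ] H) : H →L[ℂ] H :=
  CFC.sqrt (ContinuousLinearMap.adjoint A * A)

/-- real part of an operator -/
noncomputable def reOp (A : H →L[ℂ] H) : H →L[ℂ] H :=
  (1 / 2 : ℂ) • (A + ContinuousLinearMap.adjoint A)

/-- imaginary part of an operator -/
noncomputable def imOp (A : H →L[ℂ] H) : H →L[ℂ] H :=
  (1 / (2 * Complex.I) : ℂ) • (A - ContinuousLinearMap.adjoint A)

/-- the block diagonal operator `diag(A,B)` on `H ⊕ H` (ℓ²-sum). -/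
noncomputable def blockDiag (A B : H →L[ℂ] H) :
    WithLp 2 (H × H) →L[ℂ] WithLp 2 (H × H) :=
  ((WithLp.prodContinuousLinearEquiv 2 ℂ H H).symm.toContinuousLinearMap).comp
    ((A.prodMap B).comp (WithLp.prodContinuousLinearEquiv 2 ℂ H H).toContinuousLinearMap)

/-- the off-diagonal block operator `[[O,A],[B,O]] : (x,y) ↦ (A y, B x)` on `H ⊕ H`. -/
noncomputable def blockOffDiag (A B : H →L[ℂ] H) :
    WithLp 2 (H × H) →L[ℂ] WithLp 2 (H × H) :=
  ((WithLp.prodContinuousLinearEquiv 2 ℂ H H).symm.toContinuousLinearMap).comp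
    (((A.prodMap B).comp (ContinuousLinearEquiv.prodComm ℂ H H).toContinuousLinearMap).comp
      (WithLp.prodContinuousLinearEquiv 2 ℂ H H).toContinuousLinearMap)

/-!
Testing `⟪T z, z⟫` on `z = (u, c • v)`, with a unimodular `c` aligning the phases of `⟪A v, u⟫`
and `⟪B u, v⟫`, gives `|⟪A v, u⟫| + |⟪B u, v⟫| ≤ 2 w(T)` for unit vectors `u, v`, hence
`‖A ± B*‖ ≤ 2 w(T)`. On the other hand `(A + B*)* + (A - B*) = 2 (Re A + i Im B)`, so
`‖A + B*‖ + ‖A - B*‖ ≥ 2 ‖Re A + i Im B‖`, which equals `4 w(T)` under the hypothesis: both upper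
bounds are attained.
-/

open ContinuousLinearMap ComplexConjugate

lemma exists_norm_eq_one_norm_conj_mul_add_mul_eq (α β : ℂ) :
    ∃ c : ℂ, ‖c‖ = 1 ∧ ‖conj c * α + c * β‖ = ‖α‖ + ‖β‖ := by
  set θ : ℝ := (α.arg - β.arg) / 2
  refine ⟨Complex.exp (θ * Complex.I), Complex.norm_exp_ofReal_mul_I θ, ?_⟩
  have key : conj (Complex.exp (θ * Complex.I)) * α + Complex.exp (θ * Complex.I) * β
      = ((‖α‖ + ‖β‖ : ℝ) : ℂ) * Complex.exp (((α.arg + β.arg) / 2 : ℝ) * Complex.I) := by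
    conv_lhs => rw [← Complex.norm_mul_exp_arg_mul_I α, ← Complex.norm_mul_exp_arg_mul_I β]
    rw [← Complex.exp_conj, map_mul, Complex.conj_ofReal, Complex.conj_I, mul_left_comm,
      ← Complex.exp_add, mul_left_comm, ← Complex.exp_add]
    push_cast [θ]
    ring_nf
  rw [key, norm_mul, Complex.norm_exp_ofReal_mul_I, Complex.norm_real, Real.norm_eq_abs,
    abs_of_nonneg (by positivity), mul_one]

section NumRad

variable {E : Type*} [NormedAddCommGroup E] [InnerProductSpace ℂ E]

lemma numRad_nonneg (T : E →L[ℂ] E) : 0 ≤ numRad T :=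
  Real.iSup_nonneg fun _ ↦ norm_nonneg _

lemma norm_inner_le_numRad (T : E →L[ℂ] E) {x : E} (hx : ‖x‖ = 1) :
    ‖inner ℂ (T x) x‖ ≤ numRad T := by
  refine le_ciSup (f := fun x : {x : E // ‖x‖ = 1} ↦ ‖inner ℂ (T x) (x : E)‖) ⟨‖T‖, ?_⟩ ⟨x, hx⟩
  rintro _ ⟨⟨y, hy⟩, rfl⟩
  simpa [hy] using norm_inner_le_norm (𝕜 := ℂ) (T y) y |>.trans
    (mul_le_mul_of_nonneg_right (T.le_opNorm y) (norm_nonneg y))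

lemma norm_inner_le_numRad_mul_sq (T : E →L[ℂ] E) (x : E) :
    ‖inner ℂ (T x) x‖ ≤ numRad T * ‖x‖ ^ 2 := by
  rcases eq_or_ne x 0 with rfl | hx
  · simp
  have hx' : ‖x‖ ≠ 0 := norm_ne_zero_iff.mpr hx
  have h := norm_inner_le_numRad T (x := ((‖x‖⁻¹ : ℝ) : ℂ) • x) (by simp [norm_smul, hx'])
  rw [map_smul, inner_smul_left, inner_smul_right, norm_mul, norm_mul] at h
  simp only [Complex.conj_ofReal, Complex.norm_real, norm_inv, norm_norm] at h
  rw [← mul_assoc, ← mul_inv, ← sq, inv_mul_le_iff₀ (by positivity)] at h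
  linarith

lemma inner_blockOffDiag_toLp (A B : E →L[ℂ] E) (u v : E) :
    inner ℂ (blockOffDiag A B (WithLp.toLp 2 (u, v))) (WithLp.toLp 2 (u, v))
      = inner ℂ (A v) u + inner ℂ (B u) v := by
  simp [blockOffDiag, WithLp.prod_inner_apply]

lemma norm_inner_add_norm_inner_le_numRad_blockOffDiag (A B : E →L[ℂ] E) (u v : E) :
    ‖inner ℂ (A v) u‖ + ‖inner ℂ (B u) v‖
      ≤ numRad (blockOffDiag A B) * (‖u‖ ^ 2 + ‖v‖ ^ 2) := by
  obtain ⟨c, hc, hsum⟩ :=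
    exists_norm_eq_one_norm_conj_mul_add_mul_eq (inner ℂ (A v) u) (inner ℂ (B u) v)
  have hinner : inner ℂ (blockOffDiag A B (WithLp.toLp 2 (u, c • v))) (WithLp.toLp 2 (u, c • v))
      = conj c * inner ℂ (A v) u + c * inner ℂ (B u) v := by
    rw [inner_blockOffDiag_toLp, map_smul, inner_smul_left, inner_smul_right]
  have hnorm : ‖WithLp.toLp 2 (u, c • v)‖ ^ 2 = ‖u‖ ^ 2 + ‖v‖ ^ 2 := by
    simp [WithLp.prod_norm_sq_eq_of_L2, norm_smul, hc]
  rw [← hsum, ← hinner, ← hnorm]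
  exact norm_inner_le_numRad_mul_sq _ _

end NumRad

lemma reOp_add_I_smul_imOp (A B : H →L[ℂ] H) :
    reOp A + Complex.I • imOp B = (1 / 2 : ℂ) • (A + adjoint A + (B - adjoint B)) := by
  have hI : Complex.I * (1 / (2 * Complex.I)) = 1 / 2 := by field_simp
  rw [reOp, imOp, smul_smul, hI, ← smul_add]

lemma norm_add_smul_adjoint_le_two_mul_numRad (A B : H →L[ℂ] H) {d : ℂ} (hd : ‖d‖ = 1) :
    ‖A + d • adjoint B‖ ≤ 2 * numRad (blockOffDiag A B) := by
  refine opNorm_le_of_re_inner_le (by linarith [numRad_nonneg (blockOffDiag A B)])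
    fun x y hx hy ↦ ?_
  calc RCLike.re (inner ℂ ((A + d • adjoint B) x) y)
      ≤ ‖inner ℂ ((A + d • adjoint B) x) y‖ := RCLike.re_le_norm _
    _ = ‖inner ℂ (A x) y + conj d * inner ℂ x (B y)‖ := by
      rw [add_apply, smul_apply, inner_add_left, inner_smul_left, adjoint_inner_left]
    _ ≤ ‖inner ℂ (A x) y‖ + ‖inner ℂ (B y) x‖ := by
      refine (norm_add_le _ _).trans_eq ?_
      rw [norm_mul, RCLike.norm_conj, hd, one_mul, norm_inner_symm x]
    _ ≤ numRad (blockOffDiag A B) * (‖y‖ ^ 2 + ‖x‖ ^ 2) :=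
      norm_inner_add_norm_inner_le_numRad_blockOffDiag A B y x
    _ = 2 * numRad (blockOffDiag A B) := by rw [hx, hy]; ring

lemma two_mul_norm_reOp_add_I_smul_imOp_le (A B : H →L[ℂ] H) :
    2 * ‖reOp A + Complex.I • imOp B‖ ≤ ‖A + adjoint B‖ + ‖A - adjoint B‖ := by
  have hdecomp :
      (2 : ℂ) • (reOp A + Complex.I • imOp B) = adjoint (A + adjoint B) + (A - adjoint B) := by
    rw [reOp_add_I_smul_imOp, smul_smul]
    norm_num [map_add, adjoint_adjoint]
    abel
  calc 2 * ‖reOp A + Complex.I • imOp B‖ = ‖(2 : ℂ) • (reOp A + Complex.I • imOp B)‖ := by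
        rw [norm_smul, Complex.norm_ofNat]
    _ ≤ ‖adjoint (A + adjoint B)‖ + ‖A - adjoint B‖ := hdecomp ▸ norm_add_le _ _
    _ = ‖A + adjoint B‖ + ‖A - adjoint B‖ := by rw [LinearIsometryEquiv.norm_map]

theorem numRad_blockOffDiag_eq_necessary (A B : H →L[ℂ] H)
    (h : numRad (blockOffDiag A B) = (1 / 2) * ‖reOp A + Complex.I • imOp B‖) :
    ‖A + ContinuousLinearMap.adjoint B‖ = ‖A - ContinuousLinearMap.adjoint B‖
      ∧ ‖A + ContinuousLinearMap.adjoint B‖ = ‖reOp A + Complex.I • imOp B‖ := by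
  have hplus := norm_add_smul_adjoint_le_two_mul_numRad A B (d := 1) norm_one
  have hminus := norm_add_smul_adjoint_le_two_mul_numRad A B (d := -1) (by simp)
  rw [one_smul] at hplus
  rw [neg_one_smul, ← sub_eq_add_neg] at hminus
  have hlower := two_mul_norm_reOp_add_I_smul_imOp_le A B
  constructor <;> linarith
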